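/- arXiv:2603.04386 — 2 statements merged into one kernel-verified Lean document; each statement's English description precedes it below -/
import Mathlib

section
/- Let H be a Hermitian matrix on a finite set V, z with Im z > 0, and G = (H - zI)^{-1}. For a fixed index x ∈ V, let G^{(x)} denote the resolvent of the matrix H restricted to V \ {x} (i.e. (H|_{V∖{x}} - zI)^{-1}). Then for all y, w ≠ x: G^{(x)}_{yw} = G_{yw} - G_{yx} G_{xw} / G_{xx}. -/
open Matrix

lemma herm_shift_det_ne {W : Type*} [Fintype W] [DecidableEq W]
    (H : Matrix W W ℂ) (hH : H.IsHermitian) (z : ℂ) (hz : z.im ≠ 0) :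
    IsUnit (H - z • (1 : Matrix W W ℂ)).det := by
  rw [isUnit_iff_ne_zero]
  intro hdet
  obtain ⟨v, hv0, hv⟩ := (Matrix.exists_mulVec_eq_zero_iff).2 hdet
  have hHv : H *ᵥ v = z • v := by
    rw [Matrix.sub_mulVec, Matrix.smul_mulVec, Matrix.one_mulVec, sub_eq_zero] at hv
    exact hv
  set s : ℂ := star v ⬝ᵥ (H *ᵥ v) with hs
  have hself : star s = s := by
    simp only [hs, dotProduct, mulVec, star_sum, star_mul', Pi.star_apply, star_star,
      Finset.mul_sum]
    rw [Finset.sum_comm]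
    refine Finset.sum_congr rfl fun i _ => Finset.sum_congr rfl fun j _ => ?_
    rw [← hH.apply i j]
    ring
  have ht0 : star v ⬝ᵥ v = ((∑ i, Complex.normSq (v i) : ℝ) : ℂ) := by
    simp [dotProduct, Complex.normSq_eq_conj_mul_self]
  have htpos : 0 < ∑ i, Complex.normSq (v i) := by
    have : ∃ i, v i ≠ 0 := by
      by_contra h
      push_neg at h
      exact hv0 (funext h)
    obtain ⟨i, hi⟩ := this
    exact Finset.sum_pos' (fun j _ => Complex.normSq_nonneg _)
      ⟨i, Finset.mem_univ i, Complex.normSq_pos.2 hi⟩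
  have hsz : s = z * ((∑ i, Complex.normSq (v i) : ℝ) : ℂ) := by
    rw [hs, hHv, dotProduct_smul, ht0, smul_eq_mul]
  have him : s.im = 0 := by
    have := congrArg Complex.im hself
    simp only [Complex.star_def, Complex.conj_im] at this
    linarith
  rw [hsz] at him
  simp only [Complex.mul_im, Complex.ofReal_re, Complex.ofReal_im, mul_zero, add_zero, zero_add] at him
  rcases mul_eq_zero.1 him with h | h
  · exact hz h
  · exact htpos.ne' h

/-- Resolvent identity for the removal of one row/column: for `H` Hermitian,
`Im z > 0`, `G = (H - zI)⁻¹` and `G⁽ˣ⁾` the resolvent of `H` restricted to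
`V \ {x}`, we have `G⁽ˣ⁾_{yw} = G_{yw} - G_{yx} G_{xw} / G_{xx}` for `y, w ≠ x`. -/
theorem resolvent_remove_vertex {V : Type*} [Fintype V] [DecidableEq V]
    (H : Matrix V V ℂ) (hH : H.IsHermitian) (z : ℂ) (hz : 0 < z.im)
    (G : Matrix V V ℂ) (hG : G = (H - z • (1 : Matrix V V ℂ))⁻¹)
    (x : V)
    (Gx : Matrix {v : V // v ≠ x} {v : V // v ≠ x} ℂ)
    (hGx : Gx = (H.submatrix (Subtype.val) (Subtype.val)
      - z • (1 : Matrix {v : V // v ≠ x} {v : V // v ≠ x} ℂ))⁻¹)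
    (y w : V) (hy : y ≠ x) (hw : w ≠ x) :
    Gx ⟨y, hy⟩ ⟨w, hw⟩ = G y w - G y x * G x w / G x x := by
  set A : Matrix V V ℂ := H - z • (1 : Matrix V V ℂ) with hA
  have hAdet : IsUnit A.det := herm_shift_det_ne H hH z hz.ne'
  have hGA : G * A = 1 := by rw [hG]; exact Matrix.nonsing_inv_mul A hAdet
  have hAG : A * G = 1 := by rw [hG]; exact Matrix.mul_nonsing_inv A hAdet
  -- G has nonzero determinant, hence nonzero column at x
  have hGdet : G.det ≠ 0 := by
    intro h
    have := congrArg Matrix.det hGA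
    rw [Matrix.det_mul, h, zero_mul, Matrix.det_one] at this
    exact zero_ne_one this
  have hcol : ∃ j, G j x ≠ 0 := by
    by_contra h
    push_neg at h
    exact hGdet (Matrix.det_eq_zero_of_column_eq_zero x h)
  set t : ℝ := ∑ j, Complex.normSq (G j x) with ht
  have htpos : 0 < t := by
    obtain ⟨j, hj⟩ := hcol
    exact Finset.sum_pos' (fun i _ => Complex.normSq_nonneg _)
      ⟨j, Finset.mem_univ j, Complex.normSq_pos.2 hj⟩
  -- the resolvent identity G - Gᴴ = (z - z̄) • (Gᴴ * G)
  have hAH : Aᴴ = H - (starRingEnd ℂ z) • (1 : Matrix V V ℂ) := by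
    rw [hA, Matrix.conjTranspose_sub, Matrix.conjTranspose_smul, hH.eq,
      Matrix.conjTranspose_one]
    rfl
  have hGH : Gᴴ * Aᴴ = 1 := by
    have := congrArg Matrix.conjTranspose hAG
    rwa [Matrix.conjTranspose_mul, Matrix.conjTranspose_one] at this
  have hdiff : G - Gᴴ = (z - starRingEnd ℂ z) • (Gᴴ * G) := by
    calc G - Gᴴ = Gᴴ * Aᴴ * G - Gᴴ * (A * G) := by rw [hGH, hAG, one_mul, mul_one]
      _ = Gᴴ * ((Aᴴ - A) * G) := by noncomm_ring
      _ = Gᴴ * (((z - starRingEnd ℂ z) • (1 : Matrix V V ℂ)) * G) := by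
          rw [hAH]
          congr 2
          rw [hA, sub_sub_sub_cancel_left, sub_smul]
      _ = (z - starRingEnd ℂ z) • (Gᴴ * G) := by
          rw [Matrix.smul_mul, Matrix.one_mul, Matrix.mul_smul]
  have hxx : G x x - starRingEnd ℂ (G x x) = (z - starRingEnd ℂ z) * (t : ℂ) := by
    have h := congrFun (congrFun hdiff x) x
    simp only [Matrix.sub_apply, Matrix.conjTranspose_apply, Matrix.smul_apply,
      Matrix.mul_apply, smul_eq_mul, Complex.star_def] at h
    rw [h, ht]
    push_cast
    congr 1
    refine Finset.sum_congr rfl fun j _ => ?_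
    rw [Complex.normSq_eq_conj_mul_self]
  have hGxxim : (G x x).im = z.im * t := by
    have := congrArg Complex.im hxx
    simp only [Complex.sub_im, Complex.conj_im, Complex.mul_im, Complex.sub_re,
      Complex.conj_re, Complex.ofReal_re, Complex.ofReal_im, mul_zero, add_zero,
      sub_self, sub_neg_eq_add] at this
    linarith
  have hGxx : G x x ≠ 0 := by
    intro h
    rw [h] at hGxxim
    simp only [Complex.zero_im] at hGxxim
    nlinarith
  -- the candidate left inverse
  set M : Matrix {v : V // v ≠ x} {v : V // v ≠ x} ℂ :=
    fun p q => G p q - G p x * G x q / G x x with hM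
  have hAx : H.submatrix (Subtype.val) (Subtype.val)
      - z • (1 : Matrix {v : V // v ≠ x} {v : V // v ≠ x} ℂ)
      = A.submatrix Subtype.val Subtype.val := by
    ext p q
    simp only [Matrix.sub_apply, Matrix.submatrix_apply, hA, Matrix.smul_apply,
      Matrix.one_apply, smul_eq_mul]
    congr 2
    simp [Subtype.ext_iff]
  have hsub : ∀ f : V → ℂ, ∑ u : {v : V // v ≠ x}, f u = (∑ u, f u) - f x := by
    intro f
    rw [← Finset.sum_erase_eq_sub (Finset.mem_univ x)]
    exact (Finset.sum_subtype (Finset.univ.erase x) (fun v => by simp) f).symm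
  have hMA : M * A.submatrix Subtype.val Subtype.val = 1 := by
    ext p q
    have hq : (q : V) ≠ x := q.2
    rw [Matrix.mul_apply]
    simp only [Matrix.submatrix_apply]
    have h1 : ∑ u : {v : V // v ≠ x}, M p u * A u q
        = (∑ u, (G p u - G p x * G x u / G x x) * A u q)
          - (G p x - G p x * G x x / G x x) * A x q := by
      rw [← hsub (fun u => (G p u - G p x * G x u / G x x) * A u q)]
    rw [h1]
    have h2 : (G p x - G p x * G x x / G x x) * A x q = 0 := by
      rw [mul_div_assoc, div_self hGxx, mul_one, sub_self, zero_mul]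
    have h3 : ∑ u, (G p u - G p x * G x u / G x x) * A u q
        = (G * A) (p : V) q - G p x / G x x * (G * A) x q := by
      rw [Matrix.mul_apply, Matrix.mul_apply, Finset.mul_sum, ← Finset.sum_sub_distrib]
      refine Finset.sum_congr rfl fun u _ => ?_
      ring
    rw [h2, h3, hGA, sub_zero]
    have h4 : (1 : Matrix V V ℂ) x q = 0 := by
      rw [Matrix.one_apply_ne (Ne.symm hq)]
    rw [h4, mul_zero, sub_zero]
    simp [Matrix.one_apply, Subtype.ext_iff]
  have : Gx = M := by
    rw [hGx, hAx]
    exact Matrix.inv_eq_left_inv hMA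
  rw [this]
end

section
/- Let H be a Hermitian matrix on finite V, z with Im z > 0, and G = (H - zI)^{-1}. Let (ξ_x)_{x∈V} be i.i.d. standard real Gaussians and define the complex random vector Ψ = √(Im z) · Σ_x ξ_x G_x, where G_x is the x-th column of G. Then for all u, v ∈ V, E[Ψ_u · conj(Ψ_v)] = Im(G)_{uv}, i.e. the covariance of Ψ is the imaginary part of the Green's function. -/
open Matrix MeasureTheory ProbabilityTheory

section GaussianAux

open Real Set
open scoped ENNReal NNReal

private lemma gauss_integral_eq (g : ℝ → ℝ) :
    ∫ x, g x ∂(gaussianReal 0 1) = ∫ x, gaussianPDFReal 0 1 x * g x := by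
  rw [gaussianReal_of_var_ne_zero 0 one_ne_zero]
  have h : gaussianPDF 0 1 = fun x => ((Real.toNNReal (gaussianPDFReal 0 1 x) : ℝ≥0) : ℝ≥0∞) := rfl
  rw [h, integral_withDensity_eq_integral_smul ((measurable_gaussianPDFReal 0 1).real_toNNReal)]
  congr 1; funext x
  rw [NNReal.smul_def, Real.coe_toNNReal _ (gaussianPDFReal_nonneg 0 1 x), smul_eq_mul]

private lemma gaussPDF_eq (x : ℝ) :
    gaussianPDFReal 0 1 x = (Real.sqrt (2 * π))⁻¹ * Real.exp (-(1/2) * x ^ 2) := by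
  simp only [gaussianPDFReal, NNReal.coe_one, mul_one, sub_zero]
  ring_nf

private lemma gaussPDF_even (x : ℝ) : gaussianPDFReal 0 1 (-x) = gaussianPDFReal 0 1 x := by
  simp [gaussianPDFReal, neg_sq]

private lemma gauss_m1 : ∫ x, gaussianPDFReal 0 1 x * x = 0 := by
  set f : ℝ → ℝ := fun x => gaussianPDFReal 0 1 x * x with hf
  have h1 : ∫ x, f (-x) = ∫ x, f x :=
    (Measure.measurePreserving_neg (volume : Measure ℝ)).integral_comp
      (Homeomorph.neg ℝ).measurableEmbedding f
  have h2 : ∀ x, f (-x) = - f x := by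
    intro x; simp [hf, gaussPDF_even, mul_comm]
  simp_rw [h2, integral_neg] at h1
  linarith

private lemma gauss_sq_int : Integrable (fun x : ℝ => x ^ 2 * Real.exp (-(1/2) * x ^ 2)) := by
  have := integrable_rpow_mul_exp_neg_mul_sq (b := 1/2) (by norm_num) (s := 2) (by norm_num)
  convert this using 2 with x
  rw [show ((2:ℝ) = ((2:ℕ):ℝ)) by norm_num, Real.rpow_natCast]

private lemma gauss_pdf_sq_int : Integrable (fun x : ℝ => gaussianPDFReal 0 1 x * x ^ 2) := by
  have h : (fun x : ℝ => gaussianPDFReal 0 1 x * x ^ 2)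
      = fun x : ℝ => (Real.sqrt (2 * π))⁻¹ * (x ^ 2 * Real.exp (-(1/2) * x ^ 2)) := by
    funext x; rw [gaussPDF_eq]; ring
  rw [h]
  exact gauss_sq_int.const_mul _

private lemma gauss_m2 : ∫ x, gaussianPDFReal 0 1 x * x ^ 2 = 1 := by
  have key : ∫ x in Ioi (0:ℝ), x ^ 2 * Real.exp (-(1/2) * x ^ 2)
      = ((1:ℝ)/2) ^ (-(3:ℝ)/2) * (1/2) * Real.Gamma (3/2) := by
    have := integral_rpow_mul_exp_neg_mul_rpow (p := 2) (q := 2) (b := 1/2)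
      (by norm_num) (by norm_num) (by norm_num)
    rw [show (-(2+1:ℝ)/2) = -(3:ℝ)/2 by norm_num, show ((2+1:ℝ)/2) = (3:ℝ)/2 by norm_num] at this
    rw [← this]
    refine setIntegral_congr_fun measurableSet_Ioi (fun x hx => ?_)
    rw [show ((2:ℝ) = ((2:ℕ):ℝ)) by norm_num, Real.rpow_natCast]
  have habs : ∫ x : ℝ, x ^ 2 * Real.exp (-(1/2) * x ^ 2)
      = 2 * ∫ x in Ioi (0:ℝ), x ^ 2 * Real.exp (-(1/2) * x ^ 2) := by
    rw [← integral_comp_abs (f := fun x : ℝ => x ^ 2 * Real.exp (-(1/2) * x ^ 2))]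
    congr 1; funext x; rw [sq_abs]
  have hΓ : Real.Gamma (3/2) = Real.sqrt π / 2 := by
    rw [show (3:ℝ)/2 = 1/2 + 1 by norm_num, Real.Gamma_add_one (by norm_num),
      Real.Gamma_one_half_eq]
    ring
  have hpow : ((1:ℝ)/2) ^ (-(3:ℝ)/2) = Real.sqrt 8 := by
    rw [one_div, show (-(3:ℝ)/2) = -((3:ℝ)/2) by ring, Real.rpow_neg (by norm_num),
      Real.inv_rpow (by norm_num), inv_inv,
      show ((3:ℝ)/2) = (3:ℝ) * (1/2) by ring, Real.rpow_mul (by norm_num),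
      show ((3:ℝ) = ((3:ℕ):ℝ)) by norm_num, Real.rpow_natCast,
      show ((2:ℝ)^(3:ℕ)) = 8 by norm_num, ← Real.sqrt_eq_rpow]
  have h : ∫ x, gaussianPDFReal 0 1 x * x ^ 2
      = (Real.sqrt (2 * π))⁻¹ * ∫ x : ℝ, x ^ 2 * Real.exp (-(1/2) * x ^ 2) := by
    rw [← integral_const_mul]
    congr 1; funext x; rw [gaussPDF_eq]; ring
  rw [h, habs, key, hΓ, hpow]
  rw [Real.sqrt_mul (by norm_num), show (8:ℝ) = 4 * 2 by norm_num,
    Real.sqrt_mul (by norm_num), show Real.sqrt 4 = 2 by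
      rw [show (4:ℝ) = 2^2 by norm_num, Real.sqrt_sq (by norm_num)]]
  have h2 : Real.sqrt 2 ≠ 0 := by positivity
  have hπ : Real.sqrt π ≠ 0 := by positivity
  field_simp

private lemma gauss_int_sq : Integrable (fun x : ℝ => x ^ 2) (gaussianReal 0 1) := by
  rw [gaussianReal_of_var_ne_zero 0 one_ne_zero]
  have h : gaussianPDF 0 1 = fun x => ((Real.toNNReal (gaussianPDFReal 0 1 x) : ℝ≥0) : ℝ≥0∞) := rfl
  rw [h, integrable_withDensity_iff_integrable_smul
    ((measurable_gaussianPDFReal 0 1).real_toNNReal)]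
  have h2 : (fun x : ℝ => (Real.toNNReal (gaussianPDFReal 0 1 x)) • (x ^ 2))
      = fun x : ℝ => gaussianPDFReal 0 1 x * x ^ 2 := by
    funext x
    rw [NNReal.smul_def, Real.coe_toNNReal _ (gaussianPDFReal_nonneg 0 1 x), smul_eq_mul]
  rw [h2]
  exact gauss_pdf_sq_int

private lemma gauss_memLp2 : MemLp (id : ℝ → ℝ) 2 (gaussianReal 0 1) :=
  (memLp_two_iff_integrable_sq aestronglyMeasurable_id).mpr gauss_int_sq

end GaussianAux

section WardAux

private lemma ward_aux {V : Type*} [Fintype V] [DecidableEq V]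
    (H : Matrix V V ℂ) (hH : H.IsHermitian) (z : ℂ) (hz : 0 < z.im)
    (G : Matrix V V ℂ) (hG : G = (H - z • (1 : Matrix V V ℂ))⁻¹) (u v : V) :
    (((2 * Complex.I)⁻¹) • (G - Gᴴ)) u v
      = (z.im : ℂ) * ∑ x : V, G u x * (starRingEnd ℂ) (G v x) := by
  set A : Matrix V V ℂ := H - z • (1 : Matrix V V ℂ) with hA
  have hdet : IsUnit A.det := by
    set U : Matrix V V ℂ := (hH.eigenvectorUnitary : Matrix V V ℂ) with hU
    have hU1 : U * star U = 1 := Matrix.mem_unitaryGroup_iff.mp hH.eigenvectorUnitary.2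
    have hspec : H = U * Matrix.diagonal (RCLike.ofReal ∘ hH.eigenvalues) * star U :=
      hH.spectral_theorem
    have hAeq : A = U * (Matrix.diagonal (RCLike.ofReal ∘ hH.eigenvalues)
        - z • (1 : Matrix V V ℂ)) * star U := by
      rw [Matrix.mul_sub, Matrix.sub_mul, ← hspec]
      congr 1
      rw [Matrix.mul_smul, mul_one, Matrix.smul_mul, hU1]
    have hdetA : A.det = (Matrix.diagonal (RCLike.ofReal ∘ hH.eigenvalues)
        - z • (1 : Matrix V V ℂ)).det := by
      have hU1' : star U * U = 1 := Matrix.mem_unitaryGroup_iff'.mp hH.eigenvectorUnitary.2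
      rw [hAeq, Matrix.det_mul, Matrix.det_mul, mul_comm, ← mul_assoc, ← Matrix.det_mul, hU1']
      simp
    rw [hdetA, Matrix.smul_one_eq_diagonal, Matrix.diagonal_sub, Matrix.det_diagonal]
    refine isUnit_iff_ne_zero.mpr (Finset.prod_ne_zero_iff.mpr fun i _ => ?_)
    intro h
    have him := congrArg Complex.im h
    simp [Complex.sub_im] at him
    exact (ne_of_gt hz) him
  have hdetAH : IsUnit Aᴴ.det := by
    rw [Matrix.det_conjTranspose]; exact hdet.star
  have hGA : G * A = 1 := by rw [hG]; exact Matrix.nonsing_inv_mul _ hdet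
  have hAHGH : Aᴴ * Gᴴ = 1 := by
    rw [hG, Matrix.conjTranspose_nonsing_inv]
    exact Matrix.mul_nonsing_inv _ hdetAH
  have hAH : Aᴴ - A = (z - (starRingEnd ℂ) z) • (1 : Matrix V V ℂ) := by
    rw [hA, Matrix.conjTranspose_sub, Matrix.conjTranspose_smul, Matrix.conjTranspose_one, hH.eq]
    rw [sub_sub_sub_cancel_left, ← sub_smul]
    rfl
  have key : G - Gᴴ = (z - (starRingEnd ℂ) z) • (G * Gᴴ) := by
    calc G - Gᴴ = G * (Aᴴ * Gᴴ) - (G * A) * Gᴴ := by rw [hGA, hAHGH, mul_one, one_mul]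
    _ = G * Aᴴ * Gᴴ - G * A * Gᴴ := by rw [mul_assoc, mul_assoc]
    _ = G * (Aᴴ - A) * Gᴴ := by noncomm_ring
    _ = (z - (starRingEnd ℂ) z) • (G * Gᴴ) := by
        rw [hAH, Matrix.mul_smul, mul_one, Matrix.smul_mul]
  rw [key, Complex.sub_conj]
  simp only [Matrix.smul_apply, smul_eq_mul, Matrix.mul_apply, Matrix.conjTranspose_apply]
  rw [← mul_assoc]
  have hI : (2 * Complex.I)⁻¹ * ((2 * z.im : ℝ) * Complex.I) = (z.im : ℂ) := by
    push_cast
    field_simp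
  rw [hI]
  simp [RCLike.star_def]

end WardAux

/-- Pushing i.i.d. standard Gaussians through the resolvent: for `H` Hermitian,
`Im z > 0`, `G = (H - zI)⁻¹`, i.i.d. standard real Gaussians `(ξ_x)` and
`Ψ_u = √(Im z) ∑_x ξ_x G_{ux}`, the covariance `E[Ψ_u conj(Ψ_v)]` equals
`Im(G)_{uv} = ((G - Gᴴ)/(2i))_{uv}`. -/
theorem gaussian_wave_covariance {V : Type*} [Fintype V] [DecidableEq V]
    (H : Matrix V V ℂ) (hH : H.IsHermitian) (z : ℂ) (hz : 0 < z.im)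
    (G : Matrix V V ℂ) (hG : G = (H - z • (1 : Matrix V V ℂ))⁻¹)
    {Ω : Type*} [MeasureSpace Ω] (μ : Measure Ω) [IsProbabilityMeasure μ]
    (ξ : V → Ω → ℝ) (hmeas : ∀ x, Measurable (ξ x))
    (hlaw : ∀ x, μ.map (ξ x) = gaussianReal 0 1)
    (hindep : iIndepFun ξ μ)
    (Ψ : V → Ω → ℂ)
    (hΨ : ∀ u ω, Ψ u ω = (Real.sqrt z.im : ℂ) * ∑ x : V, (ξ x ω : ℂ) * G u x)
    (u v : V) :
    ∫ ω, Ψ u ω * (starRingEnd ℂ) (Ψ v ω) ∂μ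
      = (((2 * Complex.I)⁻¹) • (G - Gᴴ)) u v := by
  -- moments of the Gaussians
  have hmem2 : ∀ x, MemLp (ξ x) 2 μ := fun x => by
    have h := (memLp_map_measure_iff aestronglyMeasurable_id (hmeas x).aemeasurable).mp
      (by rw [hlaw x]; exact gauss_memLp2)
    exact h
  have hint : ∀ x, Integrable (ξ x) μ := fun x => (hmem2 x).integrable one_le_two
  have hmulint : ∀ x y, Integrable (fun ω => ξ x ω * ξ y ω) μ := by
    intro x y
    rcases eq_or_ne x y with rfl | hxy
    · have h := (memLp_two_iff_integrable_sq (hmeas x).aestronglyMeasurable).mp (hmem2 x)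
      simpa [pow_two] using h
    · exact (hindep.indepFun hxy).integrable_mul (hint x) (hint y)
  have hmean : ∀ x, ∫ ω, ξ x ω ∂μ = 0 := fun x => by
    have h : ∫ ω, ξ x ω ∂μ = ∫ y, y ∂(μ.map (ξ x)) :=
      (integral_map (hmeas x).aemeasurable aestronglyMeasurable_id).symm
    rw [h, hlaw x, gauss_integral_eq, gauss_m1]
  have hm2 : ∀ x, ∫ ω, ξ x ω * ξ x ω ∂μ = 1 := fun x => by
    have h : ∫ ω, ξ x ω * ξ x ω ∂μ = ∫ y, y * y ∂(μ.map (ξ x)) :=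
      (integral_map (hmeas x).aemeasurable
        (aestronglyMeasurable_id.mul aestronglyMeasurable_id)).symm
    rw [h, hlaw x, gauss_integral_eq, ← gauss_m2]
    congr 1; funext y; ring
  have hmom : ∀ x y, ∫ ω, ξ x ω * ξ y ω ∂μ = if x = y then 1 else 0 := by
    intro x y
    rcases eq_or_ne x y with rfl | hxy
    · simp [hm2 x]
    · rw [if_neg hxy]
      have h := (hindep.indepFun hxy).integral_mul_eq_mul_integral
        (hmeas x).aestronglyMeasurable (hmeas y).aestronglyMeasurable
      calc ∫ ω, ξ x ω * ξ y ω ∂μ = (∫ ω, ξ x ω ∂μ) * ∫ ω, ξ y ω ∂μ := h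
      _ = 0 := by rw [hmean x, zero_mul]
  -- pointwise expansion of the product
  have hexp : ∀ ω, Ψ u ω * (starRingEnd ℂ) (Ψ v ω)
      = ∑ x : V, ∑ y : V, ((ξ x ω * ξ y ω : ℝ) : ℂ)
          * ((z.im : ℂ) * (G u x * (starRingEnd ℂ) (G v y))) := by
    intro ω
    rw [hΨ u ω, hΨ v ω, _root_.map_mul, map_sum, Complex.conj_ofReal, mul_mul_mul_comm,
      ← Complex.ofReal_mul, Real.mul_self_sqrt hz.le, Finset.sum_mul_sum, Finset.mul_sum]
    refine Finset.sum_congr rfl fun x _ => ?_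
    rw [Finset.mul_sum]
    refine Finset.sum_congr rfl fun y _ => ?_
    rw [_root_.map_mul, Complex.conj_ofReal]
    push_cast
    ring
  -- integrate term by term
  have hL : ∫ ω, Ψ u ω * (starRingEnd ℂ) (Ψ v ω) ∂μ
      = ∑ x : V, ∑ y : V, ((∫ ω, ξ x ω * ξ y ω ∂μ : ℝ) : ℂ)
          * ((z.im : ℂ) * (G u x * (starRingEnd ℂ) (G v y))) := by
    have hof : ∀ x y : V, Integrable
        (fun ω => ((ξ x ω * ξ y ω : ℝ) : ℂ)
          * ((z.im : ℂ) * (G u x * (starRingEnd ℂ) (G v y)))) μ := fun x y =>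
      ((hmulint x y).ofReal (𝕜 := ℂ)).mul_const _
    have hcast : ∀ (f : Ω → ℝ), Integrable f μ →
        ∫ ω, ((f ω : ℝ) : ℂ) ∂μ = ((∫ ω, f ω ∂μ : ℝ) : ℂ) := fun f hf => by
      exact integral_ofReal
    simp_rw [hexp]
    rw [integral_finset_sum _ (fun x _ => integrable_finset_sum _ (fun y _ => hof x y))]
    refine Finset.sum_congr rfl fun x _ => ?_
    rw [integral_finset_sum _ (fun y _ => hof x y)]
    refine Finset.sum_congr rfl fun y _ => ?_
    rw [integral_mul_const, hcast _ (hmulint x y)]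
  rw [hL, ward_aux H hH z hz G hG u v]
  simp_rw [hmom]
  rw [Finset.mul_sum]
  refine Finset.sum_congr rfl fun x _ => ?_
  rw [Finset.sum_eq_single x]
  · simp
  · intro y _ hyx; simp [Ne.symm hyx]
  · intro hx; exact absurd (Finset.mem_univ x) hx
end
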